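/- For P, Q ∈ Γ_n with 0 < r ≤ p_i/q_i ≤ R for all i, (1/R)·I(P||Q) ≤ G(P||Q) ≤ (1/r)·I(P||Q), where G(P||Q) = ∑((p_i+q_i)/2)ln((p_i+q_i)/(2p_i)) and I(P||Q) = (1/2)∑[p_i ln(2p_i/(p_i+q_i)) + q_i ln(2q_i/(p_i+q_i))]. -/

import Mathlib

/-!
Both sides are Csiszár f-divergences `∑ qᵢ f(pᵢ/qᵢ)`: `G` with generator `g = agGen` and `I`
with generator `f = jsGen`. For a constant `c` the gap `φ_c = agJsGap c = c g - f + c/2 (t - 1)`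
vanishes together with its derivative at `t = 1`, and the bounds `1 - 1/x ≤ log x ≤ x - 1` show
that `φ_c'` changes sign only at `1` and at `c`. Hence `φ_R ≥ 0` on `(0, R]` and `φ_r ≤ 0` on
`[r, ∞)`, where `r ≤ 1 ≤ R` because `∑ pᵢ = ∑ qᵢ`. Weighting by `qᵢ` and summing removes the
linear term and gives `r G ≤ I ≤ R G`.
-/

open Finset Real

noncomputable def csiszarDiv {ι : Type*} [Fintype ι] (f : ℝ → ℝ) (p q : ι → ℝ) : ℝ :=
  ∑ i, q i * f (p i / q i)

noncomputable def agGen (t : ℝ) : ℝ := (t + 1) / 2 * log ((t + 1) / (2 * t))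

noncomputable def jsGen (t : ℝ) : ℝ := (t * log (2 * t / (t + 1)) + log (2 / (t + 1))) / 2

noncomputable def agJsGap (c t : ℝ) : ℝ := c * agGen t - jsGen t + c / 2 * (t - 1)

noncomputable def agJsGapDeriv (c t : ℝ) : ℝ :=
  (c + 1) / 2 * log ((t + 1) / (2 * t)) + c / 2 * (1 - 1 / t)

section Csiszar

variable {ι : Type*} [Fintype ι] {p q : ι → ℝ}

lemma csiszarDiv_const_mul (c : ℝ) (f : ℝ → ℝ) :
    csiszarDiv (fun t => c * f t) p q = c * csiszarDiv f p q := by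
  simp only [csiszarDiv, mul_sum, mul_left_comm]

lemma csiszarDiv_le_csiszarDiv_of_le_add_linear {f g : ℝ → ℝ} (k : ℝ) (hq : ∀ i, 0 < q i)
    (hpq : ∑ i, p i = ∑ i, q i) (h : ∀ i, f (p i / q i) ≤ g (p i / q i) + k * (p i / q i - 1)) :
    csiszarDiv f p q ≤ csiszarDiv g p q := by
  have hlin : ∀ i, q i * (g (p i / q i) + k * (p i / q i - 1))
      = q i * g (p i / q i) + k * (p i - q i) := fun i => by
    field_simp [(hq i).ne']
  calc csiszarDiv f p q ≤ ∑ i, q i * (g (p i / q i) + k * (p i / q i - 1)) :=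
        sum_le_sum fun i _ => mul_le_mul_of_nonneg_left (h i) (hq i).le
    _ = csiszarDiv g p q + k * (∑ i, p i - ∑ i, q i) := by
        simp only [hlin, sum_add_distrib, ← mul_sum, sum_sub_distrib, csiszarDiv]
    _ = csiszarDiv g p q := by rw [hpq, sub_self, mul_zero, add_zero]

end Csiszar

lemma mul_agGen_div {p q : ℝ} (hp : 0 < p) (hq : 0 < q) :
    q * agGen (p / q) = (p + q) / 2 * log ((p + q) / (2 * p)) := by
  have harg : (p / q + 1) / (2 * (p / q)) = (p + q) / (2 * p) := by field_simp
  rw [agGen, harg]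
  field_simp

lemma mul_jsGen_div {p q : ℝ} (hp : 0 < p) (hq : 0 < q) :
    q * jsGen (p / q) = 1 / 2 * (p * log (2 * p / (p + q)) + q * log (2 * q / (p + q))) := by
  have harg₁ : 2 * (p / q) / (p / q + 1) = 2 * p / (p + q) := by field_simp
  have harg₂ : 2 / (p / q + 1) = 2 * q / (p + q) := by field_simp
  rw [jsGen, harg₁, harg₂]
  field_simp

lemma jsGen_eq_neg_agGen_sub {t : ℝ} (ht : 0 < t) : jsGen t = -agGen t - log t / 2 := by
  have ht1 : t + 1 ≠ 0 := by positivity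
  rw [jsGen, agGen, log_div (by positivity) ht1, log_div two_ne_zero ht1,
    log_div ht1 (by positivity), log_mul two_ne_zero ht.ne']
  ring

lemma hasDerivAt_agGen {t : ℝ} (ht : 0 < t) :
    HasDerivAt agGen (log ((t + 1) / (2 * t)) / 2 - 1 / (2 * t)) t := by
  have hratio := ((hasDerivAt_id' t).add_const 1).div ((hasDerivAt_id' t).const_mul 2)
    (by positivity : 2 * t ≠ 0)
  have := (((hasDerivAt_id' t).add_const 1).div_const 2).mul
    (hratio.log (by positivity : (t + 1) / (2 * t) ≠ 0))
  refine HasDerivAt.congr_deriv (f := agGen) this ?_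
  simp only [Pi.div_apply]
  field_simp
  ring

lemma hasDerivAt_agJsGap (c : ℝ) {t : ℝ} (ht : 0 < t) :
    HasDerivAt (agJsGap c) (agJsGapDeriv c t) t := by
  have hjs : jsGen =ᶠ[nhds t] fun x => -agGen x - log x / 2 :=
    Filter.eventually_of_mem (Ioi_mem_nhds ht) fun x hx => jsGen_eq_neg_agGen_sub hx
  have := (((hasDerivAt_agGen ht).const_mul c).sub
    (((hasDerivAt_agGen ht).neg.sub ((hasDerivAt_log ht.ne').div_const 2)).congr_of_eventuallyEq
      hjs)).add (((hasDerivAt_id' t).sub_const 1).const_mul (c / 2))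
  refine HasDerivAt.congr_deriv (f := agJsGap c) this ?_
  rw [agJsGapDeriv]
  field_simp
  ring

lemma log_add_one_div_two_mul_le {t : ℝ} (ht : 0 < t) :
    log ((t + 1) / (2 * t)) ≤ (1 - t) / (2 * t) :=
  calc log ((t + 1) / (2 * t)) ≤ (t + 1) / (2 * t) - 1 := log_le_sub_one_of_pos (by positivity)
    _ = (1 - t) / (2 * t) := by field_simp; ring

lemma div_le_log_add_one_div_two_mul {t : ℝ} (ht : 0 < t) :
    (1 - t) / (t + 1) ≤ log ((t + 1) / (2 * t)) :=
  calc (1 - t) / (t + 1) = 1 - ((t + 1) / (2 * t))⁻¹ := by field_simp; ring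
    _ ≤ log ((t + 1) / (2 * t)) := one_sub_inv_le_log_of_pos (by positivity)

lemma agJsGapDeriv_le {c t : ℝ} (hc : -1 ≤ c) (ht : 0 < t) :
    agJsGapDeriv c t ≤ (1 - t) * (1 - c) / (4 * t) :=
  calc agJsGapDeriv c t ≤ (c + 1) / 2 * ((1 - t) / (2 * t)) + c / 2 * (1 - 1 / t) := by
        rw [agJsGapDeriv]
        gcongr ?_ + _
        exact mul_le_mul_of_nonneg_left (log_add_one_div_two_mul_le ht) (by linarith)
    _ = (1 - t) * (1 - c) / (4 * t) := by field_simp; ring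

lemma le_agJsGapDeriv {c t : ℝ} (hc : -1 ≤ c) (ht : 0 < t) :
    (1 - t) * (t - c) / (2 * t * (t + 1)) ≤ agJsGapDeriv c t :=
  calc (1 - t) * (t - c) / (2 * t * (t + 1))
        = (c + 1) / 2 * ((1 - t) / (t + 1)) + c / 2 * (1 - 1 / t) := by field_simp; ring
    _ ≤ agJsGapDeriv c t := by
        rw [agJsGapDeriv]
        gcongr ?_ + _
        exact mul_le_mul_of_nonneg_left (div_le_log_add_one_div_two_mul ht) (by linarith)

lemma agJsGap_one (c : ℝ) : agJsGap c 1 = 0 := by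
  norm_num [agJsGap, agGen, jsGen]

lemma jsGen_le_of_le {c t : ℝ} (hc : 1 ≤ c) (ht : 0 < t) (htc : t ≤ c) :
    jsGen t ≤ c * agGen t + c / 2 * (t - 1) := by
  have hd : ∀ x, 0 < x → HasDerivAt (agJsGap c) (agJsGapDeriv c x) x :=
    fun x hx => hasDerivAt_agJsGap c hx
  have hmin : IsMinOn (agJsGap c) (Set.Ioc 0 c) 1 :=
    isMinOn_Ioc_of_deriv (hd 1 one_pos).continuousAt (hd c (by linarith)).continuousAt
      (fun x hx => (hd x hx.1).differentiableAt.differentiableWithinAt)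
      (fun x hx => (hd x (by linarith [hx.1])).differentiableAt.differentiableWithinAt)
      (fun x hx => by
        rw [(hd x hx.1).deriv]
        exact (agJsGapDeriv_le (by linarith) hx.1).trans <| div_nonpos_of_nonpos_of_nonneg
          (mul_nonpos_of_nonneg_of_nonpos (by linarith [hx.2]) (by linarith)) (by linarith [hx.1]))
      (fun x hx => by
        rw [(hd x (by linarith [hx.1])).deriv]
        refine le_trans ?_ (le_agJsGapDeriv (by linarith) (by linarith [hx.1]))
        exact div_nonneg (mul_nonneg_of_nonpos_of_nonpos (by linarith [hx.1]) (by linarith [hx.2]))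
          (by nlinarith [hx.1]))
  have := isMinOn_iff.mp hmin t ⟨ht, htc⟩
  rw [agJsGap_one, agJsGap] at this
  linarith

lemma le_jsGen_of_le {c t : ℝ} (hc0 : 0 < c) (hc : c ≤ 1) (hct : c ≤ t) :
    c * agGen t + c / 2 * (t - 1) ≤ jsGen t := by
  have hd : ∀ x, 0 < x → HasDerivAt (agJsGap c) (agJsGapDeriv c x) x :=
    fun x hx => hasDerivAt_agJsGap c hx
  have hmax : IsMaxOn (agJsGap c) (Set.Ici c) 1 :=
    isMaxOn_Ici_of_deriv (hd c hc0).continuousAt (hd 1 one_pos).continuousAt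
      (fun x hx => (hd x (by linarith [hx.1])).differentiableAt.differentiableWithinAt)
      (fun x hx => (hd x (by linarith [hx.out])).differentiableAt.differentiableWithinAt)
      (fun x hx => by
        rw [(hd x (by linarith [hx.1])).deriv]
        refine le_trans ?_ (le_agJsGapDeriv (by linarith) (by linarith [hx.1]))
        exact div_nonneg (mul_nonneg (by linarith [hx.2]) (by linarith [hx.1]))
          (by nlinarith [hx.1]))
      (fun x hx => by
        have hx1 : 1 < x := hx
        rw [(hd x (by linarith)).deriv]
        exact (agJsGapDeriv_le (by linarith) (by linarith)).trans <| div_nonpos_of_nonpos_of_nonneg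
          (mul_nonpos_of_nonpos_of_nonneg (by linarith) (by linarith)) (by linarith))
  have := isMaxOn_iff.mp hmax t hct
  rw [agJsGap_one, agJsGap] at this
  linarith

theorem stmt15 (n : ℕ) (p q : Fin n → ℝ)
    (hp : ∀ i, 0 < p i) (hq : ∀ i, 0 < q i)
    (hp1 : ∑ i, p i = 1) (hq1 : ∑ i, q i = 1)
    (r R : ℝ) (hr : 0 < r) (hrR : ∀ i, r ≤ p i / q i ∧ p i / q i ≤ R) :
    (1/R) * (((1:ℝ)/2) * ∑ i, (p i * Real.log (2 * p i / (p i + q i)) + q i * Real.log (2 * q i / (p i + q i)))) ≤ (∑ i, ((p i + q i)/2) * Real.log ((p i + q i) / (2 * p i))) ∧ (∑ i, ((p i + q i)/2) * Real.log ((p i + q i) / (2 * p i))) ≤ (1/r) * (((1:ℝ)/2) * ∑ i, (p i * Real.log (2 * p i / (p i + q i)) + q i * Real.log (2 * q i / (p i + q i)))) := by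
  have hR : 1 ≤ R :=
    calc 1 = ∑ i, p i := hp1.symm
      _ ≤ ∑ i, q i * R := sum_le_sum fun i _ => (div_le_iff₀' (hq i)).mp (hrR i).2
      _ = R := by rw [← sum_mul, hq1, one_mul]
  have hr1 : r ≤ 1 :=
    calc r = ∑ i, q i * r := by rw [← sum_mul, hq1, one_mul]
      _ ≤ ∑ i, p i := sum_le_sum fun i _ => (le_div_iff₀' (hq i)).mp (hrR i).1
      _ = 1 := hp1
  have hpq : ∑ i, p i = ∑ i, q i := hp1.trans hq1.symm
  have hG : ∑ i, (p i + q i) / 2 * log ((p i + q i) / (2 * p i)) = csiszarDiv agGen p q :=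
    sum_congr rfl fun i _ => (mul_agGen_div (hp i) (hq i)).symm
  have hI : 1 / 2 * ∑ i, (p i * log (2 * p i / (p i + q i)) + q i * log (2 * q i / (p i + q i)))
      = csiszarDiv jsGen p q := by
    rw [mul_sum]
    exact sum_congr rfl fun i _ => (mul_jsGen_div (hp i) (hq i)).symm
  have hIR : csiszarDiv jsGen p q ≤ R * csiszarDiv agGen p q := by
    rw [← csiszarDiv_const_mul]
    exact csiszarDiv_le_csiszarDiv_of_le_add_linear (R / 2) hq hpq fun i =>
      jsGen_le_of_le hR (div_pos (hp i) (hq i)) (hrR i).2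
  have hIr : r * csiszarDiv agGen p q ≤ csiszarDiv jsGen p q := by
    rw [← csiszarDiv_const_mul]
    exact csiszarDiv_le_csiszarDiv_of_le_add_linear (-(r / 2)) hq hpq fun i => by
      linarith [le_jsGen_of_le hr hr1 (hrR i).1]
  rw [hG, hI, one_div, one_div, inv_mul_le_iff₀ (by linarith), le_inv_mul_iff₀ hr]
  exact ⟨hIR, hIr⟩
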